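/- For nonnegative integers n ≥ m+1 and m ≥ 0, the sum over k from 0 to n of binomial(n+m, k) · (−1)^k · S₂(n+m−k, n−k) equals 0. -/
import Mathlib

/-- Stirling numbers of the second kind. -/
def S2 : ℕ → ℕ → ℕ
  | 0, 0 => 1
  | 0, _ + 1 => 0
  | _ + 1, 0 => 0
  | n + 1, k + 1 => S2 n k + (k + 1) * S2 n (k + 1)

/-- Forward difference operator. -/
def dd (f : ℕ → ℤ) : ℕ → ℤ := fun t => f (t + 1) - f t

/-- `D m t` = the Stirling polynomial `S₂(x+m, x)` evaluated at `x = t - m`. -/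
def D : ℕ → ℕ → ℤ
  | 0, _ => 1
  | _ + 1, 0 => 0
  | m + 1, t + 1 => D (m + 1) t + ((t : ℤ) - m) * D m t

lemma dd_zero : dd 0 = 0 := by funext t; simp [dd]

lemma dd_add (f g : ℕ → ℤ) : dd (f + g) = dd f + dd g := by
  funext t; simp [dd]; ring

lemma dd_iter_zero (k : ℕ) : dd^[k] 0 = 0 := by
  induction k with
  | zero => rfl
  | succ k ih => rw [Function.iterate_succ_apply, dd_zero, ih]

lemma dd_iter_add (k : ℕ) (f g : ℕ → ℤ) : dd^[k] (f + g) = dd^[k] f + dd^[k] g := by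
  induction k generalizing f g with
  | zero => rfl
  | succ k ih => rw [Function.iterate_succ_apply, Function.iterate_succ_apply,
      Function.iterate_succ_apply, dd_add, ih]

lemma dd_mono {d : ℕ} {f : ℕ → ℤ} (h : dd^[d] f = 0) (e : ℕ) : dd^[e + d] f = 0 := by
  rw [Function.iterate_add_apply, h, dd_iter_zero]

lemma mul_linear : ∀ (d : ℕ) (f : ℕ → ℤ), dd^[d] f = 0 → ∀ c : ℤ,
    dd^[d + 1] (fun t : ℕ => ((t : ℤ) + c) * f t) = 0 := by
  intro d
  induction d with
  | zero =>
    intro f hf c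
    have : f = 0 := hf
    subst this
    rw [show (fun t : ℕ => ((t : ℤ) + c) * (0 : ℕ → ℤ) t) = 0 by funext t; simp]
    exact dd_iter_zero 1
  | succ d ih =>
    intro f hf c
    have key : dd (fun t : ℕ => ((t : ℤ) + c) * f t)
        = (fun t : ℕ => ((t : ℤ) + (c + 1)) * dd f t) + f := by
      funext t; simp [dd]; ring
    have h1 : dd^[d] (dd f) = 0 := by
      rw [← Function.iterate_succ_apply]; exact hf
    have h2 := ih (dd f) h1 (c + 1)
    rw [Function.iterate_succ_apply, key, dd_iter_add, h2, hf]
    simp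

lemma dd_D (m : ℕ) : dd (D (m + 1)) = fun t : ℕ => ((t : ℤ) - m) * D m t := by
  funext t; simp [dd, D]

lemma D_kill : ∀ m : ℕ, dd^[2 * m + 1] (D m) = 0 := by
  intro m
  induction m with
  | zero =>
    have : dd (D 0) = 0 := by funext t; simp [dd, D]
    simpa using this
  | succ m ih =>
    have h := mul_linear (2 * m + 1) (D m) ih (-(m : ℤ))
    have e : (fun t : ℕ => ((t : ℤ) + -(m : ℤ)) * D m t) = dd (D (m + 1)) := by
      rw [dd_D]; funext t; ring_nf
    rw [e] at h
    have : dd^[2 * m + 1 + 1] (dd (D (m + 1))) = dd^[2 * m + 1 + 1 + 1] (D (m + 1)) := by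
      rw [← Function.iterate_succ_apply]
    rw [this] at h
    rw [show 2 * (m + 1) + 1 = 2 * m + 1 + 1 + 1 by ring]
    exact h

lemma alt_pascal (N : ℕ) (g : ℕ → ℤ) :
    ∑ k ∈ Finset.range (N + 2), (-1 : ℤ) ^ k * ((N + 1).choose k : ℤ) * g k
    = ∑ k ∈ Finset.range (N + 1), (-1 : ℤ) ^ k * (N.choose k : ℤ) * (g k - g (k + 1)) := by
  rw [Finset.sum_range_succ']
  have pascal : ∀ k : ℕ, (((N + 1).choose (k + 1) : ℤ)) = N.choose k + N.choose (k + 1) := by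
    intro k; exact_mod_cast Nat.choose_succ_succ N k
  have lhs1 : ∑ k ∈ Finset.range (N + 1),
      (-1 : ℤ) ^ (k + 1) * ((N + 1).choose (k + 1) : ℤ) * g (k + 1)
      = (∑ k ∈ Finset.range (N + 1), (-1 : ℤ) ^ (k + 1) * (N.choose k : ℤ) * g (k + 1))
        + ∑ k ∈ Finset.range (N + 1), (-1 : ℤ) ^ (k + 1) * (N.choose (k + 1) : ℤ) * g (k + 1) := by
    rw [← Finset.sum_add_distrib]
    refine Finset.sum_congr rfl fun k _ => ?_
    rw [pascal]; ring
  have lhs2 : ∑ k ∈ Finset.range (N + 1),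
      (-1 : ℤ) ^ (k + 1) * (N.choose (k + 1) : ℤ) * g (k + 1)
      = ∑ k ∈ Finset.range N, (-1 : ℤ) ^ (k + 1) * (N.choose (k + 1) : ℤ) * g (k + 1) := by
    rw [Finset.sum_range_succ]; simp
  have rhs1 : ∑ k ∈ Finset.range (N + 1), (-1 : ℤ) ^ k * (N.choose k : ℤ) * (g k - g (k + 1))
      = (∑ k ∈ Finset.range (N + 1), (-1 : ℤ) ^ k * (N.choose k : ℤ) * g k)
        - ∑ k ∈ Finset.range (N + 1), (-1 : ℤ) ^ k * (N.choose k : ℤ) * g (k + 1) := by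
    rw [← Finset.sum_sub_distrib]
    refine Finset.sum_congr rfl fun k _ => ?_
    ring
  have rhs2 : ∑ k ∈ Finset.range (N + 1), (-1 : ℤ) ^ k * (N.choose k : ℤ) * g k
      = (∑ k ∈ Finset.range N, (-1 : ℤ) ^ (k + 1) * (N.choose (k + 1) : ℤ) * g (k + 1)) + g 0 := by
    rw [Finset.sum_range_succ']; simp
  rw [lhs1, lhs2, rhs1, rhs2]
  have neg : ∑ x ∈ Finset.range (N + 1), (-1 : ℤ) ^ (x + 1) * (N.choose x : ℤ) * g (x + 1)
      + ∑ x ∈ Finset.range (N + 1), (-1 : ℤ) ^ x * (N.choose x : ℤ) * g (x + 1) = 0 := by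
    rw [← Finset.sum_add_distrib]
    apply Finset.sum_eq_zero
    intro x _
    ring
  have t0 : ((-1 : ℤ) ^ 0 * ((N + 1).choose 0 : ℤ) * g 0) = g 0 := by simp
  rw [t0]
  linarith

lemma binom : ∀ (N : ℕ) (f : ℕ → ℤ) (a : ℕ), dd^[N] f a
    = ∑ k ∈ Finset.range (N + 1), (-1 : ℤ) ^ k * (N.choose k : ℤ) * f (a + (N - k)) := by
  intro N
  induction N with
  | zero => intro f a; simp
  | succ N ih =>
    intro f a
    rw [Function.iterate_succ_apply, ih (dd f) a]
    rw [show N + 1 + 1 = N + 2 by ring, alt_pascal N (fun k => f (a + (N + 1 - k)))]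
    refine Finset.sum_congr rfl fun k hk => ?_
    have hkN : k ≤ N := by
      have := Finset.mem_range.mp hk; omega
    have h1 : a + (N + 1 - k) = a + (N - k) + 1 := by omega
    have h2 : a + (N + 1 - (k + 1)) = a + (N - k) := by omega
    simp only [h1, h2, dd]

lemma S2_eq_zero : ∀ n k : ℕ, n < k → S2 n k = 0 := by
  intro n
  induction n with
  | zero => intro k hk; cases k with
    | zero => omega
    | succ k => rfl
  | succ n ih =>
    intro k hk
    cases k with
    | zero => omega
    | succ k =>
      rw [S2, ih k (by omega), ih (k + 1) (by omega)]
      ring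

lemma S2_self : ∀ n : ℕ, S2 n n = 1 := by
  intro n
  induction n with
  | zero => rfl
  | succ n ih => rw [S2, ih, S2_eq_zero n (n + 1) (by omega)]; ring

lemma D_zero : ∀ m t : ℕ, t ≤ m + 1 → D (m + 1) t = 0 := by
  intro m
  induction m with
  | zero =>
    intro t ht
    interval_cases t
    · rfl
    · show D 1 0 + ((0 : ℤ) - 0) * D 0 0 = 0
      simp [D]
  | succ m ih =>
    intro t ht
    induction t with
    | zero => rfl
    | succ t iht =>
      show D (m + 2) t + ((t : ℤ) - (m + 1)) * D (m + 1) t = 0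
      rw [iht (by omega)]
      rcases Nat.lt_or_ge t (m + 1) with hlt | hge
      · rw [ih t (by omega)]; ring
      · have : t = m + 1 := by omega
        subst this
        push_cast
        ring

lemma D_eq_S2 : ∀ m j : ℕ, D m (m + j) = (S2 (m + j) j : ℤ) := by
  intro m
  induction m with
  | zero =>
    intro j
    have h1 : D 0 (0 + j) = 1 := by simp [D]
    rw [h1, Nat.zero_add, S2_self]
    simp
  | succ m ih =>
    intro j
    induction j with
    | zero =>
      rw [D_zero m (m + 1) (by omega)]
      show (0 : ℤ) = (S2 (m + 1) 0 : ℤ)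
      rw [show S2 (m + 1) 0 = 0 from rfl]; simp
    | succ j ihj =>
      have step : D (m + 1) (m + 1 + (j + 1)) = D (m + 1) (m + 1 + j)
          + (((m + 1 + j : ℕ) : ℤ) - m) * D m (m + 1 + j) := by
        rw [show m + 1 + (j + 1) = (m + 1 + j) + 1 by ring]
        rfl
      rw [step, ihj, show m + 1 + j = m + (j + 1) by ring, ih (j + 1)]
      have hs : S2 (m + (j + 1) + 1) (j + 1)
          = S2 (m + (j + 1)) j + (j + 1) * S2 (m + (j + 1)) (j + 1) := rfl
      rw [show m + 1 + (j + 1) = m + (j + 1) + 1 by ring, hs]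
      push_cast
      ring

theorem stmt_5 (n m : ℕ) (h : m + 1 ≤ n) :
    ∑ k ∈ Finset.range (n + 1),
      ((n + m).choose k : ℤ) * (-1 : ℤ) ^ k * (S2 (n + m - k) (n - k) : ℤ) = 0 := by
  have hfull : dd^[n + m] (D m) 0 = 0 := by
    have := dd_mono (D_kill m) (n + m - (2 * m + 1))
    rw [show n + m - (2 * m + 1) + (2 * m + 1) = n + m by omega] at this
    rw [this]; rfl
  rw [binom (n + m) (D m) 0] at hfull
  have hsub : ∑ k ∈ Finset.range (n + 1),
      (-1 : ℤ) ^ k * ((n + m).choose k : ℤ) * D m (0 + (n + m - k))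
      = ∑ k ∈ Finset.range (n + m + 1),
      (-1 : ℤ) ^ k * ((n + m).choose k : ℤ) * D m (0 + (n + m - k)) := by
    apply Finset.sum_subset (Finset.range_subset_range.mpr (by omega))
    intro k hk hnk
    have hk1 : n + 1 ≤ k := by simpa using hnk
    have hk2 : k ≤ n + m := by have := Finset.mem_range.mp hk; omega
    obtain ⟨m', rfl⟩ : ∃ m', m = m' + 1 := ⟨m - 1, by omega⟩
    rw [D_zero m' (0 + (n + (m' + 1) - k)) (by omega)]
    ring
  have hcongr : ∑ k ∈ Finset.range (n + 1),
      ((n + m).choose k : ℤ) * (-1 : ℤ) ^ k * (S2 (n + m - k) (n - k) : ℤ)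
      = ∑ k ∈ Finset.range (n + 1),
      (-1 : ℤ) ^ k * ((n + m).choose k : ℤ) * D m (0 + (n + m - k)) := by
    refine Finset.sum_congr rfl fun k hk => ?_
    have hkn : k ≤ n := by have := Finset.mem_range.mp hk; omega
    have e1 : 0 + (n + m - k) = m + (n - k) := by omega
    rw [e1, D_eq_S2 m (n - k), show m + (n - k) = n + m - k by omega]
    ring
  rw [hcongr, hsub, hfull]
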